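/- arXiv:2204.04784 — 4 statements merged into one kernel-verified Lean document; each statement's English description precedes it below -/
import Mathlib

section
/- Let K be a local field with ring of integers R, let A = K^r be the split semisimple commutative algebra with maximal order Λ_0 = R^r, and let Λ be an R-order in A. If M and M' are full Λ-lattices with Λ ⊆ M ⊆ Λ_0 and Λ ⊆ M' ⊆ Λ_0, M is itself an R-order (i.e., a subring), and φ: M → M' is a Λ-module isomorphism, then M = M'. -/
/-!
If `M = M'·u⁻¹` with `1 ∈ M'`, then `u⁻¹ ∈ M`; and `u ∈ M' ⊆ Λ₀` is integral over `R`, so an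
integral equation for `u`, multiplied by a power of `u⁻¹`, expresses `u` as a polynomial in `u⁻¹`.
Hence `u ∈ R[u⁻¹] ⊆ M`, and since `M` is a ring containing both `u` and `u⁻¹`, `M·u = M`.
-/

open Polynomial

theorem IsIntegral.mem_adjoin_of_mul_eq_one {R A : Type*} [CommRing R] [CommRing A]
    [Algebra R A] {x y : A} (hx : IsIntegral R x) (hxy : x * y = 1) :
    x ∈ Algebra.adjoin R {y} := by
  obtain ⟨p, hp, hpx⟩ := hx
  let : Invertible x := invertibleOfRightInverse x y hxy
  have hy : aeval y p.reverse = 0 := (eval₂_reverse_eq_zero_iff (algebraMap R A) x p).2 hpx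
  -- `p` is monic, so its reverse has constant coefficient `1`.
  have hdivX : y * aeval y p.reverse.divX + 1 = 0 := by
    rw [← hy]
    conv_rhs => rw [← X_mul_divX_add p.reverse]
    simp [coeff_zero_reverse, hp.leadingCoeff]
  have hx_eq : x = -aeval y p.reverse.divX := by
    linear_combination x * hdivX - aeval y p.reverse.divX * hxy
  rw [hx_eq]
  exact neg_mem (aeval_mem_adjoin_singleton R y)

theorem IsIntegral.pi {R ι : Type*} [CommRing R] [Finite ι] {A : ι → Type*}
    [∀ i, CommRing (A i)] [∀ i, Algebra R (A i)] {x : ∀ i, A i}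
    (hx : ∀ i, IsIntegral R (x i)) : IsIntegral R x := by
  cases nonempty_fintype ι
  choose p hp hpx using hx
  refine ⟨∏ i, p i, monic_prod_of_monic _ _ fun i _ => hp i, ?_⟩
  show aeval x (∏ i, p i) = 0
  funext j
  rw [aeval_pi_apply₂, map_prod]
  exact Finset.prod_eq_zero (Finset.mem_univ j) (hpx j)

theorem Submonoid.image_mul_unit_eq_self {A : Type*} [Monoid A] (S : Submonoid A) (u : Aˣ)
    (hu : (u : A) ∈ S) (hu_inv : ((u⁻¹ : Aˣ) : A) ∈ S) :
    (· * (u : A)) '' S = S := by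
  refine Set.Subset.antisymm ?_ fun x hx => ⟨x * ↑u⁻¹, S.mul_mem hx hu_inv, by simp⟩
  rintro _ ⟨x, hx, rfl⟩
  exact S.mul_mem hx hu

theorem stmt_6_general (R : Type*) [CommRing R] (r : ℕ)
    (Λ : Subalgebra R (Fin r → FractionRing R))
    (M M' : Submodule R (Fin r → FractionRing R))
    (hΛM : (Λ : Set (Fin r → FractionRing R)) ⊆ M)
    (hΛM' : (Λ : Set (Fin r → FractionRing R)) ⊆ M')
    (hM'Λ0 : ∀ x ∈ M', ∀ i, IsLocalization.IsInteger R (x i))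
    (hMring : ∀ x ∈ M, ∀ y ∈ M, x * y ∈ M)
    (u : (Fin r → FractionRing R)ˣ)
    (hiso : (fun x => x * (u : Fin r → FractionRing R)) '' M = M') :
    M = M' := by
  have h1M : (1 : Fin r → FractionRing R) ∈ M := hΛM Λ.one_mem
  have hu_mem' : (u : Fin r → FractionRing R) ∈ M' := by
    rw [← SetLike.mem_coe, ← hiso]
    exact ⟨1, h1M, one_mul _⟩
  have hu_inv_mem : ((u⁻¹ : (Fin r → FractionRing R)ˣ) : Fin r → FractionRing R) ∈ M := by
    have h1M' := hΛM' Λ.one_mem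
    rw [← hiso] at h1M'
    obtain ⟨m, hm, hmu⟩ := h1M'
    rwa [← Units.mul_eq_one_iff_eq_inv.1 hmu]
  have hu_int : IsIntegral R (u : Fin r → FractionRing R) := IsIntegral.pi fun i => by
    obtain ⟨a, ha⟩ := hM'Λ0 _ hu_mem' i
    exact ha ▸ isIntegral_algebraMap
  let O := M.toSubalgebra h1M fun x y hx hy => hMring x hx y hy
  have hu_mem : (u : Fin r → FractionRing R) ∈ M :=
    Algebra.adjoin_le (S := O) (Set.singleton_subset_iff.2 hu_inv_mem)
      (hu_int.mem_adjoin_of_mul_eq_one u.mul_inv)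
  exact SetLike.coe_injective <|
    hiso ▸ (O.toSubmonoid.image_mul_unit_eq_self u hu_mem hu_inv_mem).symm

/-- If `M`, `M'` are full `Λ`-lattices between `Λ` and the maximal order
`Λ₀ = R^r`, `M` is a subring, and `M' = M·u` for a unit `u` of `A` (i.e. `M`
and `M'` are isomorphic as `Λ`-modules), then `M = M'`. -/
theorem stmt_6 (R : Type*) [CommRing R] [IsDomain R] [IsDiscreteValuationRing R]
    [Finite (R ⧸ IsLocalRing.maximalIdeal R)] (r : ℕ)
    (Λ : Subalgebra R (Fin r → FractionRing R))
    (hΛfg : (Subalgebra.toSubmodule Λ).FG)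
    (hΛfull : Submodule.span (FractionRing R) (Λ : Set (Fin r → FractionRing R)) = ⊤)
    (M M' : Submodule R (Fin r → FractionRing R)) (hMfg : M.FG) (hM'fg : M'.FG)
    (hMmod : ∀ a ∈ Λ, ∀ x ∈ M, a * x ∈ M) (hM'mod : ∀ a ∈ Λ, ∀ x ∈ M', a * x ∈ M')
    (hΛM : (Λ : Set (Fin r → FractionRing R)) ⊆ M)
    (hΛM' : (Λ : Set (Fin r → FractionRing R)) ⊆ M')
    (hMΛ0 : ∀ x ∈ M, ∀ i, IsLocalization.IsInteger R (x i))
    (hM'Λ0 : ∀ x ∈ M', ∀ i, IsLocalization.IsInteger R (x i))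
    (hMring : ∀ x ∈ M, ∀ y ∈ M, x * y ∈ M)
    (u : (Fin r → FractionRing R)ˣ)
    (hiso : (fun x => x * (u : Fin r → FractionRing R)) '' M = M') :
    M = M' :=
  stmt_6_general R r Λ M M' hΛM hΛM' hM'Λ0 hMring u hiso
end

section
/- Let p be a prime and m ≥ 1. Define for 0 ≤ i ≤ m the quantity Z_i(s) = p^{-ms-is+i-1}(p-1)(1-p^{-s})^{-2} + p^{-ms+is} ∑_{j=1}^{i} p^{(i-j) - 2(i-j)s} for i ≥ 1, and Z_0(s) = p^{-ms}(1-p^{-s})^{-2}. Then ∑_{i=0}^{m} Z_i(s) = [ (1-p^{-s}) ∑_{r=0}^{m-1} p^{r(1-2s)} + p^{m(1-2s)} ] (1-p^{-s})^{-2}, for all complex s with p^{-s} ≠ 1. -/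
/-!
With `t = p ^ (-s)` every exponent in the statement is `a + b * (-s)` with natural `a`, `b`
(for `1 ≤ i ≤ m`), so `Z_i` becomes `p ^ (i - 1) t ^ (m + i) (p - 1) / (1 - t) ^ 2 +
t ^ (m - i) ∑_{k < i} (p t ^ 2) ^ k`. After clearing `(1 - t) ^ 2` the identity is polynomial
in `p` and `t`, and holds by induction on `m`: passing from `m` to `m + 1` multiplies every old
summand by `t`.
-/

open Finset

theorem Finset.sum_Icc_one_sub_eq_sum_range {M : Type*} [AddCommMonoid M] (f : ℕ → M) (n : ℕ) :
    ∑ j ∈ Icc 1 n, f (n - j) = ∑ k ∈ range n, f k := by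
  rw [← Ico_add_one_right_eq_Icc, sum_Ico_reflect f 1 le_rfl, Nat.sub_self, Nat.add_sub_cancel,
    Nat.Ico_zero_eq_range]

theorem Complex.cpow_natCast_add_natCast_mul {q : ℂ} (hq : q ≠ 0) (a b : ℕ) (w : ℂ) :
    q ^ ((a : ℂ) + b * w) = q ^ a * (q ^ w) ^ b := by
  rw [Complex.cpow_add _ _ hq, Complex.cpow_natCast, Complex.cpow_nat_mul]

theorem sum_Z_mul_one_sub_sq {R : Type*} [CommRing R] (q t : R) (m : ℕ) :
    t ^ m + ∑ i ∈ Icc 1 m, (q ^ (i - 1) * t ^ (m + i) * (q - 1)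
        + (1 - t) ^ 2 * (t ^ (m - i) * ∑ k ∈ range i, (q * t ^ 2) ^ k))
      = (1 - t) * ∑ r ∈ range m, (q * t ^ 2) ^ r + (q * t ^ 2) ^ m := by
  induction m with
  | zero => simp
  | succ m ih =>
    have hshift : ∑ i ∈ Icc 1 m, (q ^ (i - 1) * t ^ (m + 1 + i) * (q - 1)
          + (1 - t) ^ 2 * (t ^ (m + 1 - i) * ∑ k ∈ range i, (q * t ^ 2) ^ k))
        = t * ∑ i ∈ Icc 1 m, (q ^ (i - 1) * t ^ (m + i) * (q - 1)
          + (1 - t) ^ 2 * (t ^ (m - i) * ∑ k ∈ range i, (q * t ^ 2) ^ k)) := by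
      rw [mul_sum]
      refine sum_congr rfl fun i hi => ?_
      rw [Nat.sub_add_comm (mem_Icc.1 hi).2]
      ring
    rw [sum_Icc_succ_top (by omega), hshift, sum_range_succ, Nat.add_sub_cancel, Nat.sub_self]
    linear_combination t * ih

theorem sum_Z_eq {K : Type*} [Field K] (q t : K) (ht : 1 - t ≠ 0) (m : ℕ) :
    t ^ m * ((1 - t)⁻¹) ^ 2
      + ∑ i ∈ Icc 1 m, (q ^ (i - 1) * t ^ (m + i) * (q - 1) * ((1 - t)⁻¹) ^ 2
        + t ^ (m - i) * ∑ k ∈ range i, (q * t ^ 2) ^ k)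
      = ((1 - t) * ∑ r ∈ range m, (q * t ^ 2) ^ r + (q * t ^ 2) ^ m) * ((1 - t)⁻¹) ^ 2 := by
  have hc : (1 - t) ^ 2 * ((1 - t)⁻¹) ^ 2 = 1 := by rw [← mul_pow, mul_inv_cancel₀ ht, one_pow]
  rw [← sum_Z_mul_one_sub_sq, add_mul, sum_mul]
  congr 1
  refine sum_congr rfl fun i _ => ?_
  linear_combination (-(t ^ (m - i) * ∑ k ∈ range i, (q * t ^ 2) ^ k)) * hc

theorem stmt_11_general (p : ℕ) (hp : p.Prime) (m : ℕ) (s : ℂ)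
    (hs : (p : ℂ) ^ (-s) ≠ 1) :
    (p : ℂ) ^ (-(m : ℂ) * s) * ((1 - (p : ℂ) ^ (-s))⁻¹) ^ 2
      + ∑ i ∈ Finset.Icc 1 m,
          ((p : ℂ) ^ (-(m : ℂ) * s - (i : ℂ) * s + (i : ℂ) - 1) * ((p : ℂ) - 1)
              * ((1 - (p : ℂ) ^ (-s))⁻¹) ^ 2
            + (p : ℂ) ^ (-(m : ℂ) * s + (i : ℂ) * s)
              * ∑ j ∈ Finset.Icc 1 i,
                  (p : ℂ) ^ (((i : ℂ) - (j : ℂ)) - 2 * ((i : ℂ) - (j : ℂ)) * s))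
    = ((1 - (p : ℂ) ^ (-s)) * ∑ r ∈ Finset.range m, (p : ℂ) ^ ((r : ℂ) * (1 - 2 * s))
        + (p : ℂ) ^ ((m : ℂ) * (1 - 2 * s))) * ((1 - (p : ℂ) ^ (-s))⁻¹) ^ 2 := by
  set t := (p : ℂ) ^ (-s)
  have hpow (a b : ℕ) : (p : ℂ) ^ ((a : ℂ) + b * (-s)) = (p : ℂ) ^ a * t ^ b :=
    Complex.cpow_natCast_add_natCast_mul (Nat.cast_ne_zero.2 hp.ne_zero) a b (-s)
  have hgeom (n : ℕ) : (p : ℂ) ^ ((n : ℂ) * (1 - 2 * s)) = ((p : ℂ) * t ^ 2) ^ n := by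
    rw [Complex.cpow_nat_mul, show 1 - 2 * s = ((1 : ℕ) : ℂ) + (2 : ℕ) * (-s) by push_cast; ring,
      hpow, pow_one]
  have hexp_first (i : ℕ) (hi : 1 ≤ i) :
      (p : ℂ) ^ (-(m : ℂ) * s - (i : ℂ) * s + (i : ℂ) - 1) = (p : ℂ) ^ (i - 1) * t ^ (m + i) := by
    rw [← hpow]; congr 1; push_cast [hi]; ring
  have hexp_second (i : ℕ) (hi : i ≤ m) :
      (p : ℂ) ^ (-(m : ℂ) * s + (i : ℂ) * s) = t ^ (m - i) := by
    rw [← one_mul (t ^ _), ← pow_zero (p : ℂ), ← hpow]; congr 1; push_cast [hi]; ring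
  have hinner (i : ℕ) :
      ∑ j ∈ Icc 1 i, (p : ℂ) ^ (((i : ℂ) - (j : ℂ)) - 2 * ((i : ℂ) - (j : ℂ)) * s)
        = ∑ k ∈ range i, ((p : ℂ) * t ^ 2) ^ k := by
    rw [← sum_Icc_one_sub_eq_sum_range]
    refine sum_congr rfl fun j hj => ?_
    rw [← hgeom]; congr 1; push_cast [(mem_Icc.1 hj).2]; ring
  convert sum_Z_eq (p : ℂ) t (sub_ne_zero.2 hs.symm) m using 3 with i hi
  · rw [neg_mul, ← mul_neg, Complex.cpow_nat_mul]
  · rw [hexp_first i (mem_Icc.1 hi).1, hexp_second i (mem_Icc.1 hi).2, hinner]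
  · simp only [hgeom]
  · exact hgeom m

theorem stmt_11 (p : ℕ) (hp : p.Prime) (m : ℕ) (hm : 1 ≤ m) (s : ℂ)
    (hs : (p : ℂ) ^ (-s) ≠ 1) :
    (p : ℂ) ^ (-(m : ℂ) * s) * ((1 - (p : ℂ) ^ (-s))⁻¹) ^ 2
      + ∑ i ∈ Finset.Icc 1 m,
          ((p : ℂ) ^ (-(m : ℂ) * s - (i : ℂ) * s + (i : ℂ) - 1) * ((p : ℂ) - 1)
              * ((1 - (p : ℂ) ^ (-s))⁻¹) ^ 2
            + (p : ℂ) ^ (-(m : ℂ) * s + (i : ℂ) * s)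
              * ∑ j ∈ Finset.Icc 1 i,
                  (p : ℂ) ^ (((i : ℂ) - (j : ℂ)) - 2 * ((i : ℂ) - (j : ℂ)) * s))
    = ((1 - (p : ℂ) ^ (-s)) * ∑ r ∈ Finset.range m, (p : ℂ) ^ ((r : ℂ) * (1 - 2 * s))
        + (p : ℂ) ^ ((m : ℂ) * (1 - 2 * s))) * ((1 - (p : ℂ) ^ (-s))⁻¹) ^ 2 :=
  stmt_11_general p hp m s hs
end

section
/- Let n > 1 be odd and identify the adjacency order of the crown graph K_{n,n}−I with the subring Λ of Z^4 generated by b_0 = (1,1,1,1), b_1 = (n-1, -(n-1), -1, 1), b_2 = (n-1, n-1, -1, -1), b_3 = (1, -1, 1, -1). Then after tensoring with Z_2, Λ ⊗ Z_2 is isomorphic as a Z_2-algebra to the product of two copies of the order {(a,b) ∈ Z_2 × Z_2 : a ≡ b mod 2}. -/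
/-!
We have `b₀ = 1`, `b₂ = n u - 1` for the idempotent `u = (1,1,0,0)`, and `b₁ = b₃ b₂`. As `n` is
odd it is a unit of `ℤ₂`, so `Λ ⊗ ℤ₂` is generated by `u` and `b₃`. These generate exactly the
vectors whose coordinates agree mod 2 within the pairs `{0,1}` and `{2,3}`, because
`(1 + b₃) u = (2,0,0,0)` and `(1 + b₃)(1 - u) = (0,0,2,0)`.
-/

/-- The order `{(a,b) ∈ ℤ₂ × ℤ₂ : a ≡ b mod 2}`. -/
def crownFactor : Subalgebra ℤ_[2] (ℤ_[2] × ℤ_[2]) where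
  carrier := {x | (2 : ℤ_[2]) ∣ x.1 - x.2}
  add_mem' := by
    intro a b ha hb
    simpa [add_sub_add_comm] using dvd_add ha hb
  mul_mem' := by
    intro a b ha hb
    have h : (a * b).1 - (a * b).2 = a.1 * (b.1 - b.2) + (a.1 - a.2) * b.2 := by
      simp [Prod.fst_mul, Prod.snd_mul]; ring
    rw [Set.mem_setOf_eq, h]
    exact dvd_add (Dvd.dvd.mul_left hb a.1) (Dvd.dvd.mul_right ha b.2)
  algebraMap_mem' := by
    intro r
    simp [Algebra.algebraMap_eq_smul_one]

theorem PadicInt.isUnit_intCast_of_not_dvd {p : ℕ} [Fact p.Prime] {k : ℤ} (hk : ¬(p : ℤ) ∣ k) :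
    IsUnit (k : ℤ_[p]) := by
  by_contra h
  exact hk ((norm_int_lt_one_iff_dvd k).mp (not_isUnit_iff.mp h))

theorem Algebra.adjoin_one_mul_smul_sub_one_of_isUnit {R A : Type*} [CommRing R] [Ring A]
    [Algebra R A] (u w : A) {n : R} (hn : IsUnit n) :
    Algebra.adjoin R {1, w * (n • u - 1), n • u - 1, w} = Algebra.adjoin R {u, w} := by
  set S := Algebra.adjoin R {u, w}
  set T := Algebra.adjoin R {1, w * (n • u - 1), n • u - 1, w}
  apply le_antisymm
  · have hu : u ∈ S := Algebra.subset_adjoin (by simp)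
    have hw : w ∈ S := Algebra.subset_adjoin (by simp)
    have hv : n • u - 1 ∈ S := S.sub_mem (S.smul_mem hu n) S.one_mem
    rw [Algebra.adjoin_le_iff]
    rintro x (rfl | rfl | rfl | rfl)
    exacts [S.one_mem, S.mul_mem hw hv, hv, hw]
  · have hv : n • u - 1 ∈ T := Algebra.subset_adjoin (by simp)
    rw [Algebra.adjoin_le_iff]
    rintro x (rfl | rfl)
    · obtain ⟨m, rfl⟩ := hn
      simpa [smul_smul] using T.smul_mem (T.add_mem hv T.one_mem) (↑m⁻¹ : R)
    · exact Algebra.subset_adjoin (by simp)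

section CongrModTwo

variable (R : Type*) [CommRing R]

def pairwiseCongrModTwo : Subalgebra R (Fin 4 → R) where
  carrier := {f | (2 : R) ∣ f 0 - f 1 ∧ (2 : R) ∣ f 2 - f 3}
  add_mem' := fun ⟨ha₁, ha₂⟩ ⟨hb₁, hb₂⟩ => by
    simp only [Set.mem_ofPred_eq, Pi.add_apply, add_sub_add_comm]
    exact ⟨dvd_add ha₁ hb₁, dvd_add ha₂ hb₂⟩
  mul_mem' := fun ⟨ha₁, ha₂⟩ ⟨hb₁, hb₂⟩ => ⟨dvd_mul_sub_mul ha₁ hb₁, dvd_mul_sub_mul ha₂ hb₂⟩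
  algebraMap_mem' _ := by simp

variable {R}

theorem mem_pairwiseCongrModTwo {f : Fin 4 → R} :
    f ∈ pairwiseCongrModTwo R ↔ (2 : R) ∣ f 0 - f 1 ∧ (2 : R) ∣ f 2 - f 3 := Iff.rfl

theorem adjoin_eq_pairwiseCongrModTwo :
    Algebra.adjoin R {![1, 1, 0, 0], ![1, -1, 1, -1]} = pairwiseCongrModTwo R := by
  set u : Fin 4 → R := ![1, 1, 0, 0]
  set w : Fin 4 → R := ![1, -1, 1, -1]
  apply le_antisymm
  · rw [Algebra.adjoin_le_iff]
    rintro x (rfl | rfl) <;> simp [mem_pairwiseCongrModTwo, u, w, one_add_one_eq_two]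
  · rintro f ⟨⟨p, hp⟩, ⟨q, hq⟩⟩
    have hf : f = f 3 • 1 + (f 1 - f 3) • u + (1 + w) * (p • u + q • (1 - u)) := by
      ext i
      fin_cases i
        <;> simp only [Pi.add_apply, Pi.mul_apply, Pi.smul_apply, Pi.one_apply, Pi.sub_apply,
          smul_eq_mul]
        <;> simp [u, w]
      · linear_combination hp
      · linear_combination hq
    set S := Algebra.adjoin R {u, w}
    have h1 : (1 : Fin 4 → R) ∈ S := S.one_mem
    have hu : u ∈ S := Algebra.subset_adjoin (by simp)
    have hw : w ∈ S := Algebra.subset_adjoin (by simp)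
    rw [hf]
    exact S.add_mem (S.add_mem (S.smul_mem h1 _) (S.smul_mem hu _))
      (S.mul_mem (S.add_mem h1 hw) (S.add_mem (S.smul_mem hu _) (S.smul_mem (S.sub_mem h1 hu) _)))

end CongrModTwo

def pairwiseCongrModTwoEquiv : pairwiseCongrModTwo ℤ_[2] ≃ₐ[ℤ_[2]] crownFactor × crownFactor where
  toFun f := (⟨(f.1 0, f.1 1), f.2.1⟩, ⟨(f.1 2, f.1 3), f.2.2⟩)
  invFun g := ⟨![g.1.1.1, g.1.1.2, g.2.1.1, g.2.1.2], g.1.2, g.2.2⟩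
  left_inv f := Subtype.ext <| funext fun i => by fin_cases i <;> rfl
  right_inv _ := rfl
  map_mul' _ _ := rfl
  map_add' _ _ := rfl
  commutes' _ := rfl

theorem stmt_14_general (n : ℤ) (hodd : Odd n) :
    let b0 : Fin 4 → ℤ_[2] := ![1, 1, 1, 1]
    let b1 : Fin 4 → ℤ_[2] := ![(n : ℤ_[2]) - 1, -((n : ℤ_[2]) - 1), -1, 1]
    let b2 : Fin 4 → ℤ_[2] := ![(n : ℤ_[2]) - 1, (n : ℤ_[2]) - 1, -1, -1]
    let b3 : Fin 4 → ℤ_[2] := ![1, -1, 1, -1]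
    Nonempty ((Algebra.adjoin ℤ_[2] ({b0, b1, b2, b3} : Set (Fin 4 → ℤ_[2])))
      ≃ₐ[ℤ_[2]] (crownFactor × crownFactor)) := by
  intro b0 b1 b2 b3
  set u : Fin 4 → ℤ_[2] := ![1, 1, 0, 0]
  have hb0 : b0 = 1 := by ext i; fin_cases i <;> rfl
  have hb2 : b2 = (n : ℤ_[2]) • u - 1 := by ext i; fin_cases i <;> simp [b2, u]
  have hb1 : b1 = b3 * b2 := by ext i; fin_cases i <;> simp [b1, b2, b3]
  have hn : IsUnit (n : ℤ_[2]) :=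
    PadicInt.isUnit_intCast_of_not_dvd (by simpa [← even_iff_two_dvd] using hodd)
  have hΛ : Algebra.adjoin ℤ_[2] {b0, b1, b2, b3} = pairwiseCongrModTwo ℤ_[2] := by
    rw [hb1, hb0, hb2, Algebra.adjoin_one_mul_smul_sub_one_of_isUnit u b3 hn]
    exact adjoin_eq_pairwiseCongrModTwo
  exact ⟨(Subalgebra.equivOfEq _ _ hΛ).trans pairwiseCongrModTwoEquiv⟩

theorem stmt_14 (n : ℤ) (hn : 1 < n) (hodd : Odd n) :
    let b0 : Fin 4 → ℤ_[2] := ![1, 1, 1, 1]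
    let b1 : Fin 4 → ℤ_[2] := ![(n : ℤ_[2]) - 1, -((n : ℤ_[2]) - 1), -1, 1]
    let b2 : Fin 4 → ℤ_[2] := ![(n : ℤ_[2]) - 1, (n : ℤ_[2]) - 1, -1, -1]
    let b3 : Fin 4 → ℤ_[2] := ![1, -1, 1, -1]
    Nonempty ((Algebra.adjoin ℤ_[2] ({b0, b1, b2, b3} : Set (Fin 4 → ℤ_[2])))
      ≃ₐ[ℤ_[2]] (crownFactor × crownFactor)) :=
  stmt_14_general n hodd
end

section
/- Let Λ = Z_3·b_0 + Z_3·(3e_1 + 6e_2) + Z_3·(9e_2) ⊆ Z_3^3, where b_0 = e_0+e_1+e_2 and e_i are the standard idempotents of Z_3^3 (the 3-adic adjacency order of the generalized quadrangle GQ(2,1)). Then the unit group Λ^× has index 12 in (Z_3^3)^× = (Z_3^×)^3. -/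
/-!
Since `9 • (Fin 3 → ℤ_[3]) ⊆ Λ`, the order `Λ` is the preimage of its reduction modulo 9, the
multiplicatively closed set of `v` with `3 ∣ v 1 - v 0` and `9 ∣ v 0 - 2 v 1 + v 2`. As `ℤ_[3]` is
local, units of `ℤ_[3]³` surject onto `((ZMod 9)ˣ)³`, so `Λˣ` has the same index as the units of
this reduction, namely `216 / 18 = 12`.
-/

open PadicInt

theorem PadicInt.pow_dvd_iff_toZModPow_eq_zero {p : ℕ} [Fact p.Prime] (n : ℕ) (a : ℤ_[p]) :
    (p : ℤ_[p]) ^ n ∣ a ↔ toZModPow n a = 0 := by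
  rw [← Ideal.mem_span_singleton, ← ker_toZModPow, RingHom.mem_ker]

theorem PadicInt.surjective_units_map_toZModPow {p : ℕ} [Fact p.Prime] {n : ℕ} (hn : n ≠ 0) :
    Function.Surjective (Units.map (toZModPow n : ℤ_[p] →+* ZMod (p ^ n)).toMonoidHom) :=
  have : Fact (1 < p ^ n) := ⟨Nat.one_lt_pow hn (Fact.out : p.Prime).one_lt⟩
  have hf := ZMod.ringHom_surjective (toZModPow n : ℤ_[p] →+* ZMod (p ^ n))
  IsLocalRing.surjective_units_map_of_local_ringHom _ hf (.of_surjective _ hf)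

theorem RingHom.surjective_units_map_compLeft {R S : Type*} [Semiring R] [Semiring S]
    (f : R →+* S) (hf : Function.Surjective (Units.map f.toMonoidHom)) (ι : Type*) :
    Function.Surjective (Units.map (f.compLeft ι).toMonoidHom) := by
  intro y
  choose u hu using fun i => hf (MulEquiv.piUnits y i)
  refine ⟨MulEquiv.piUnits.symm u, Units.ext (funext fun i => ?_)⟩
  simpa using congr_arg Units.val (hu i)

theorem mem_adjacencyOrder_iff_dvd {R : Type*} [CommRing R] (v : Fin 3 → R) :
    v ∈ Submodule.span R ({![1, 1, 1], ![0, 3, 6], ![0, 0, 9]} : Set (Fin 3 → R)) ↔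
      3 ∣ v 1 - v 0 ∧ 9 ∣ v 0 - 2 * v 1 + v 2 := by
  rw [Submodule.mem_span_insert]
  simp only [Submodule.mem_span_pair]
  constructor
  · rintro ⟨a, _, ⟨c, d, rfl⟩, rfl⟩
    refine ⟨⟨c, ?_⟩, ⟨d, ?_⟩⟩ <;> simp <;> ring
  · rintro ⟨⟨c, hc⟩, ⟨d, hd⟩⟩
    refine ⟨v 0, _, ⟨c, d, rfl⟩, funext fun i => ?_⟩
    fin_cases i <;> simp
    · linear_combination hc
    · linear_combination 2 * hc + hd

def adjacencyOrderMod9 : Submonoid (Fin 3 → ZMod 9) where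
  carrier := {v | 3 * (v 1 - v 0) = 0 ∧ v 0 - 2 * v 1 + v 2 = 0}
  one_mem' := by decide
  mul_mem' := by
    rintro a b ⟨ha₁, ha₂⟩ ⟨hb₁, hb₂⟩
    have hprod : (a 1 - a 0) * (b 1 - b 0) = 0 := by
      generalize a 1 - a 0 = x at ha₁ ⊢
      generalize b 1 - b 0 = y at hb₁ ⊢
      revert x y; decide
    refine ⟨?_, ?_⟩ <;> simp only [Pi.mul_apply]
    · linear_combination a 1 * hb₁ + b 0 * ha₁
    -- by the relations for `a` and `b`, this one reads `2 (a 1 - a 0) (b 1 - b 0) = 0`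
    · linear_combination b 2 * ha₂ + (2 * a 1 - a 0) * hb₂ + 2 * hprod

noncomputable def reduceMod9 : (Fin 3 → ℤ_[3]) →+* (Fin 3 → ZMod 9) :=
  (toZModPow 2).compLeft (Fin 3)

theorem mem_adjacencyOrder_iff_reduceMod9_mem (v : Fin 3 → ℤ_[3]) :
    v ∈ Submodule.span ℤ_[3] ({![1, 1, 1], ![0, 3, 6], ![0, 0, 9]} : Set (Fin 3 → ℤ_[3])) ↔
      reduceMod9 v ∈ adjacencyOrderMod9 := by
  have dvd9 (a : ℤ_[3]) : 9 ∣ a ↔ toZModPow 2 a = 0 := by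
    norm_num [← pow_dvd_iff_toZModPow_eq_zero]
  have dvd3 (a : ℤ_[3]) : 3 ∣ a ↔ 3 * toZModPow 2 a = 0 := by
    rw [← map_ofNat (toZModPow 2) 3, ← map_mul, ← dvd9, show (9 : ℤ_[3]) = 3 * 3 by norm_num,
      mul_dvd_mul_iff_left (by norm_num)]
  rw [mem_adjacencyOrder_iff_dvd, dvd3, dvd9]
  simp [reduceMod9, adjacencyOrderMod9, map_ofNat]

instance : DecidablePred (· ∈ adjacencyOrderMod9) := fun v =>
  inferInstanceAs (Decidable (3 * (v 1 - v 0) = 0 ∧ v 0 - 2 * v 1 + v 2 = 0))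

instance (y : Fin 3 → (ZMod 9)ˣ) :
    Decidable (y ∈ adjacencyOrderMod9.units.comap MulEquiv.piUnits.symm.toMonoidHom) :=
  inferInstanceAs (Decidable ((fun i => (y i : ZMod 9)) ∈ adjacencyOrderMod9 ∧
    (fun i => (((y i)⁻¹ : (ZMod 9)ˣ) : ZMod 9)) ∈ adjacencyOrderMod9))

theorem index_units_adjacencyOrderMod9 : adjacencyOrderMod9.units.index = 12 := by
  let W := adjacencyOrderMod9.units.comap
    (MulEquiv.piUnits.symm.toMonoidHom : (Fin 3 → (ZMod 9)ˣ) →* (Fin 3 → ZMod 9)ˣ)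
  have hW : Nat.card W = 18 := by
    rw [Nat.card_eq_fintype_card]; decide
  have hG : Nat.card (Fin 3 → (ZMod 9)ˣ) = 216 := by
    rw [Nat.card_pi, Finset.prod_const, Finset.card_univ, Fintype.card_fin,
      Nat.card_eq_fintype_card, ZMod.card_units_eq_totient]
    decide
  have := W.card_mul_index
  rw [hW, hG, Subgroup.index_comap_of_surjective _ MulEquiv.piUnits.symm.surjective] at this
  omega

theorem stmt_18 :
    let Λ := Submodule.span ℤ_[3]
      ({![1, 1, 1], ![0, 3, 6], ![0, 0, 9]} : Set (Fin 3 → ℤ_[3]))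
    ∃ U : Subgroup (Fin 3 → ℤ_[3])ˣ,
      (∀ x : (Fin 3 → ℤ_[3])ˣ,
        x ∈ U ↔ ((x : Fin 3 → ℤ_[3]) ∈ Λ ∧ ((x⁻¹ : (Fin 3 → ℤ_[3])ˣ) : Fin 3 → ℤ_[3]) ∈ Λ)) ∧
      U.index = 12 := by
  intro Λ
  refine ⟨adjacencyOrderMod9.units.comap (Units.map reduceMod9.toMonoidHom), fun x => ?_, ?_⟩
  · simp only [Λ, mem_adjacencyOrder_iff_reduceMod9_mem]
    exact Iff.rfl
  · rw [Subgroup.index_comap_of_surjective _ (f := Units.map reduceMod9.toMonoidHom)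
      ((toZModPow 2).surjective_units_map_compLeft (surjective_units_map_toZModPow two_ne_zero) _)]
    exact index_units_adjacencyOrderMod9
end
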